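/- arXiv:2407.05776 — 2 statements merged into one kernel-verified Lean document; each statement's English description precedes it below -/
import Mathlib

section
/- Let (E, ‖·‖) be a normed complex vector space. The polar map Φ : G_{‖·‖}(E) → G_{w*}(E*) defined by Φ(V) = V^⊥ = {ω ∈ E* : ω(x) = 0 for all x ∈ V} is a homeomorphism, where G_{‖·‖}(E) carries the Wijsman topology and G_{w*}(E*) carries the Vietoris topology. -/
open TopologicalSpace Set

/-- Subbasis for the lower topology on closed subsets. -/
def lowerSets (X : Type*) [TopologicalSpace X] : Set (Set (Closeds X)) :=
  {S : Set (Closeds X) |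
    ∃ U : Set X, IsOpen U ∧ S = {F : Closeds X | ((F : Set X) ∩ U).Nonempty}}

/-- Subbasis for the upper Vietoris topology on closed subsets. -/
def upperSets (X : Type*) [TopologicalSpace X] : Set (Set (Closeds X)) :=
  {S : Set (Closeds X) | ∃ U : Set X, IsOpen U ∧ S = {F : Closeds X | (F : Set X) ⊆ U}}

/-- The Vietoris topology: the join of the lower topology and the upper Vietoris topology. -/
def vietTop (X : Type*) [TopologicalSpace X] : TopologicalSpace (Closeds X) :=
  TopologicalSpace.generateFrom (lowerSets X ∪ upperSets X)

variable (E : Type*) [NormedAddCommGroup E] [NormedSpace ℂ E]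

/-- The set `G_{‖·‖}(E)` of norm-closed linear subspaces of `E`. -/
abbrev GNorm := {V : Submodule ℂ E // IsClosed (V : Set E)}

/-- The Wijsman topology on `G_{‖·‖}(E)`: the coarsest topology making
`V ↦ inf_{y ∈ V} ‖x - y‖` continuous for every `x ∈ E`. -/
def wijsTopG : TopologicalSpace (GNorm E) :=
  TopologicalSpace.generateFrom
    {S : Set (GNorm E) |
      ∃ (x : E) (U : Set ℝ), IsOpen U ∧
        S = (fun V : GNorm E => Metric.infDist x (V.1 : Set E)) ⁻¹' U}

/-- The closed unit ball `(E*)_1` of the dual of `E`, inside the dual equipped with the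
weak-* topology. -/
def dualBall : Set (WeakDual ℂ E) := {ω : WeakDual ℂ E | ∀ x : E, ‖ω x‖ ≤ ‖x‖}

/-- The set `G_{w*}(E*)` of weak-* closed linear subspaces of `E*`. -/
abbrev GWStar := {W : Submodule ℂ (WeakDual ℂ E) // IsClosed (W : Set (WeakDual ℂ E))}

/-- The Vietoris (Maréchal) topology on `G_{w*}(E*)`, induced by the identification of a
weak-* closed subspace `W` with its closed unit ball `(W)_1 = W ∩ (E*)_1` inside the closed
subsets of `(E*)_1` with the Vietoris topology. -/
noncomputable def vietTopG : TopologicalSpace (GWStar E) :=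
  TopologicalSpace.induced
    (fun W : GWStar E =>
      (⟨Subtype.val ⁻¹' (W.1 : Set (WeakDual ℂ E)),
        W.2.preimage continuous_subtype_val⟩ : Closeds (dualBall E)))
    (vietTop (dualBall E))

/-- The annihilator `V^⊥ = {ω ∈ E* | ω(x) = 0 for all x ∈ V}` of a subspace `V ⊆ E`, as a
subspace of the weak-* dual. -/
noncomputable def perp (V : Submodule ℂ E) : Submodule ℂ (WeakDual ℂ E) where
  carrier := {ω : WeakDual ℂ E | ∀ x ∈ V, ω x = 0}
  add_mem' := by
    intro a b ha hb x hx
    show a x + b x = 0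
    rw [ha x hx, hb x hx, add_zero]
  zero_mem' := by intro x hx; rfl
  smul_mem' := by
    intro c ω hω x hx
    show c • ω x = 0
    rw [hω x hx, smul_zero]

theorem perp_isClosed (V : Submodule ℂ E) :
    IsClosed ((perp E V : Set (WeakDual ℂ E))) := by
  have h : (perp E V : Set (WeakDual ℂ E)) = ⋂ x ∈ V, {ω : WeakDual ℂ E | ω x = 0} := by
    ext ω; simp [perp, Set.mem_iInter]; exact Iff.rfl
  rw [h]
  exact isClosed_biInter fun x _ =>
    isClosed_eq (WeakDual.eval_continuous x) continuous_const

/-!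
By Hahn–Banach, `infDist x V = max {‖ω x‖ : ω ∈ V^⊥, ‖ω‖ ≤ 1}`. Hence the Wijsman subbasic sets
`{V | a < d(x, V)}` and `{V | d(x, V) < a}` are the preimages of the Vietoris subbasic sets
"`(V^⊥)_1` meets `{a < ‖ω x‖}`" and "`(V^⊥)_1 ⊆ {‖ω x‖ < a}`". Conversely, upper Vietoris sets
are Wijsman open by compactness of the dual ball (Banach–Alaoglu). Lower Vietoris sets are
Wijsman open by a second Hahn–Banach argument: Wijsman-close to `V₀`, we have
`d(·, V₀) ≤ d(·, V) + c‖·‖` on a given finite-dimensional subspace `M` (compactness of its unit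
sphere), and then every `ω₀ ∈ (V₀^⊥)_1` is `c`-close on `M` to some `ω ∈ (V^⊥)_1`.
Bijectivity is the bipolar theorem for subspaces: `(V^⊥)_⊥ = V` for norm-closed `V` and
`(W_⊥)^⊥ = W` for weak-* closed `W`, the latter by finite-dimensional duality on a weak-*
neighbourhood of a point outside `W`.
-/

open Topology Metric Filter

theorem WeakDual.exists_finset_subset_of_mem_nhds {𝕜 F : Type*} [NormedField 𝕜] [AddCommGroup F]
    [Module 𝕜 F] [TopologicalSpace F] {ω₀ : WeakDual 𝕜 F} {U : Set (WeakDual 𝕜 F)} (hU : U ∈ 𝓝 ω₀) :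
    ∃ s : Finset F, ∃ ε > 0, {ω : WeakDual 𝕜 F | ∀ x ∈ s, ‖ω x - ω₀ x‖ < ε} ⊆ U := by
  obtain ⟨s, ε, hε, hsub⟩ :=
    ((LinearMap.weakBilin_withSeminorms (topDualPairing 𝕜 F)).mem_nhds_iff ω₀ U).1 hU
  exact ⟨s, ε, hε, fun ω hω =>
    hsub ((Seminorm.mem_ball ..).2 (Seminorm.finset_sup_apply_lt hε fun x hx => hω x hx))⟩

theorem eventually_forall_infDist_lt {α Y : Type*} [PseudoMetricSpace α] [TopologicalSpace Y]
    {S : Y → Set α} (hS : ∀ x, Continuous fun y => infDist x (S y)) {K : Set α} (hK : IsCompact K)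
    {δ : ℝ} (hδ : 0 < δ) (y₀ : Y) :
    ∀ᶠ y in 𝓝 y₀, ∀ u ∈ K, infDist u (S y₀) < infDist u (S y) + δ := by
  obtain ⟨t, -, ht, hKt⟩ := hK.finite_cover_balls (e := δ / 3) (by positivity)
  have hnear : ∀ᶠ y in 𝓝 y₀, ∀ z ∈ t, infDist z (S y₀) - δ / 3 < infDist z (S y) :=
    ht.eventually_all.2 fun z _ =>
      ((hS z).tendsto y₀).eventually_const_lt (by linarith)
  filter_upwards [hnear] with y hy u hu
  obtain ⟨z, hzt, huz⟩ := mem_iUnion₂.1 (hKt hu)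
  rw [mem_ball] at huz
  have h₀ := infDist_le_infDist_add_dist (x := u) (y := z) (s := S y₀)
  have h₁ := infDist_le_infDist_add_dist (x := z) (y := u) (s := S y)
  have h₂ := hy z hzt
  linarith [dist_comm u z]

theorem Submodule.infDist_eq_norm_mkQ {𝕜 F : Type*} [NormedField 𝕜] [SeminormedAddCommGroup F]
    [NormedSpace 𝕜 F] (V : Submodule 𝕜 F) (x : F) : infDist x V = ‖V.mkQ x‖ :=
  (QuotientAddGroup.norm_mk (S := V.toAddSubgroup) x).symm

theorem Submodule.infDist_smul {𝕜 F : Type*} [NormedField 𝕜] [SeminormedAddCommGroup F]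
    [NormedSpace 𝕜 F] (V : Submodule 𝕜 F) (a : 𝕜) (x : F) :
    infDist (a • x) V = ‖a‖ * infDist x V := by
  simp only [V.infDist_eq_norm_mkQ, map_smul, norm_smul]

theorem Submodule.infDist_le_add_mul_norm_of_norm_eq_one {𝕜 F : Type*} [RCLike 𝕜]
    [SeminormedAddCommGroup F] [NormedSpace 𝕜 F] {M V₀ V : Submodule 𝕜 F} {c : ℝ}
    (h : ∀ u ∈ M, ‖u‖ = 1 → infDist u V₀ < infDist u V + c) {u : F} (hu : u ∈ M) :
    infDist u V₀ ≤ infDist u V + c * ‖u‖ := by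
  rcases (norm_nonneg u).eq_or_lt with hu0 | hu0
  · have h₀ : infDist u V₀ ≤ ‖u‖ := by
      simpa using infDist_le_dist_of_mem (x := u) V₀.zero_mem
    rw [← hu0] at h₀ ⊢
    linarith [infDist_nonneg (x := u) (s := (V : Set F))]
  · have hunit := h ((‖u‖⁻¹ : 𝕜) • u) (M.smul_mem _ hu) (by simp [norm_smul, hu0.ne'])
    simp only [Submodule.infDist_smul, norm_inv, RCLike.norm_ofReal, abs_norm] at hunit
    have := mul_lt_mul_of_pos_left hunit hu0
    rw [mul_add, ← mul_assoc, ← mul_assoc, mul_inv_cancel₀ hu0.ne', one_mul, one_mul] at this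
    linarith

theorem continuous_vietTop_iff {X Y : Type*} [TopologicalSpace X] [TopologicalSpace Y]
    {f : Y → Closeds X} :
    Continuous[_, vietTop X] f ↔ ∀ U : Set X, IsOpen U →
      IsOpen {y | ((f y : Set X) ∩ U).Nonempty} ∧ IsOpen {y | (f y : Set X) ⊆ U} := by
  refine continuous_generateFrom_iff.trans ⟨fun h U hU => ⟨?_, ?_⟩, ?_⟩
  · exact h _ (Or.inl ⟨U, hU, rfl⟩)
  · exact h _ (Or.inr ⟨U, hU, rfl⟩)
  · rintro h _ (⟨U, hU, rfl⟩ | ⟨U, hU, rfl⟩)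
    exacts [(h U hU).1, (h U hU).2]

section

variable {E}

theorem isCompact_dualBall : IsCompact (dualBall E) := by
  have : dualBall E = WeakDual.toStrongDual ⁻¹' closedBall 0 1 := by
    ext ω
    simp [dualBall, ContinuousLinearMap.opNorm_le_iff zero_le_one]
  rw [this]
  exact WeakDual.isCompact_closedBall 0 1

theorem norm_apply_le_infDist {V : Submodule ℂ E} {ω : WeakDual ℂ E} (hω : ω ∈ perp E V)
    (hω₁ : ω ∈ dualBall E) (x : E) : ‖ω x‖ ≤ infDist x V :=
  (le_infDist ⟨0, V.zero_mem⟩).2 fun y hy => by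
    simpa [dist_eq_norm, hω y hy] using hω₁ (x - y)

theorem exists_mem_perp_norm_apply_eq_infDist (V : Submodule ℂ E) (x : E) :
    ∃ ω ∈ perp E V, ω ∈ dualBall E ∧ ‖ω x‖ = infDist x V := by
  obtain ⟨g, hg, hgx⟩ := exists_dual_vector'' ℂ (V.mkQ x)
  refine ⟨StrongDual.toWeakDual (g.comp V.mkQL), fun y hy => ?_, fun y => ?_, ?_⟩
  · simp [(Submodule.Quotient.mk_eq_zero V).2 hy]
  · calc ‖g (V.mkQ y)‖ ≤ 1 * ‖V.mkQ y‖ := g.le_of_opNorm_le hg _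
      _ ≤ ‖y‖ := by rw [one_mul]; exact QuotientAddGroup.norm_mk_le_norm
  · simpa [V.infDist_eq_norm_mkQ] using congrArg norm hgx

def prePerp (W : Submodule ℂ (WeakDual ℂ E)) : Submodule ℂ E where
  carrier := {x | ∀ ω ∈ W, ω x = 0}
  add_mem' ha hb ω hω := by simp [ha ω hω, hb ω hω]
  zero_mem' ω _ := map_zero ω
  smul_mem' c x hx ω hω := by simp [hx ω hω]

theorem isClosed_prePerp (W : Submodule ℂ (WeakDual ℂ E)) : IsClosed (prePerp W : Set E) := by
  simp only [prePerp, Submodule.coe_set_mk, AddSubmonoid.coe_set_mk, AddSubsemigroup.coe_set_mk,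
    Set.ofPred_forall]
  exact isClosed_biInter fun ω _ => isClosed_eq ω.continuous continuous_const

theorem prePerp_perp {V : Submodule ℂ E} (hV : IsClosed (V : Set E)) : prePerp (perp E V) = V := by
  refine le_antisymm (fun x hx => ?_) fun x hx ω hω => hω x hx
  obtain ⟨ω, hωV, -, hωx⟩ := exists_mem_perp_norm_apply_eq_infDist V x
  rw [hx ω hωV, norm_zero] at hωx
  exact (hV.mem_iff_infDist_zero ⟨0, V.zero_mem⟩).2 hωx.symm

theorem perp_prePerp {W : Submodule ℂ (WeakDual ℂ E)} (hW : IsClosed (W : Set (WeakDual ℂ E))) :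
    perp E (prePerp W) = W := by
  classical
  refine le_antisymm (fun ω₀ hω₀ => ?_) fun ω hω x hx => hx ω hω
  by_contra hω₀W
  obtain ⟨s, ε, hε, hs⟩ :=
    WeakDual.exists_finset_subset_of_mem_nhds (hW.isOpen_compl.mem_nhds hω₀W)
  let T : WeakDual ℂ E →ₗ[ℂ] s → ℂ := LinearMap.pi fun x => (topDualPairing ℂ E).flip x
  have hT : T ω₀ ∉ W.map T := by
    rintro ⟨ω, hωW, hωω₀⟩
    refine hs (fun x hx => ?_) hωW
    have hωx : ω x = ω₀ x := congrFun hωω₀ ⟨x, hx⟩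
    simpa [hωx] using hε
  obtain ⟨ψ, hψω₀, hψW⟩ := Submodule.exists_dual_map_eq_bot_of_notMem hT inferInstance
  have hψT : ∀ ω, ψ (T ω) = ω (∑ i : s, ψ (fun j => if i = j then 1 else 0) • (i : E)) := by
    intro ω
    rw [ψ.pi_apply_eq_sum_univ, map_sum]
    simp only [map_smul, smul_eq_mul]
    exact Finset.sum_congr rfl fun i _ => mul_comm _ _
  refine hψω₀ ((hψT ω₀).trans (hω₀ _ fun ω hω => ?_))
  rw [← hψT, ← Submodule.mem_bot ℂ, ← hψW]
  exact Submodule.mem_map_of_mem (Submodule.mem_map_of_mem hω)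

noncomputable def perpEquiv : GNorm E ≃ GWStar E where
  toFun V := ⟨perp E V.1, perp_isClosed E V.1⟩
  invFun W := ⟨prePerp W.1, isClosed_prePerp W.1⟩
  left_inv V := Subtype.ext (prePerp_perp V.2)
  right_inv W := Subtype.ext (perp_prePerp W.2)

theorem exists_mem_perp_forall_norm_sub_le {V M : Submodule ℂ E} {ω₀ : WeakDual ℂ E} {c : ℝ}
    (hc : 0 ≤ c) (h : ∀ u ∈ M, ‖ω₀ u‖ ≤ infDist u V + c * ‖u‖) :
    ∃ ω ∈ perp E V, ω ∈ dualBall E ∧ ∀ u ∈ M, ‖ω u - ω₀ u‖ ≤ c * ‖u‖ := by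
  -- Extending `(u, u) ↦ ω₀ u` under `p` gives `ω := g (·, 0) ∈ (V^⊥)_1` with
  -- `ω u - ω₀ u = g (0, -u)` for `u ∈ M`.
  let p : Seminorm ℂ (E × E) := (normSeminorm ℂ (E ⧸ V)).comp (V.mkQ ∘ₗ LinearMap.fst ℂ E E) +
    c.toNNReal • (normSeminorm ℂ E).comp (LinearMap.snd ℂ E E)
  have hp : ∀ z : E × E, p z = infDist z.1 V + c * ‖z.2‖ := fun z => by
    simp [p, V.infDist_eq_norm_mkQ, NNReal.smul_def, Real.coe_toNNReal c hc]
  let S : Submodule ℂ (E × E) := M.map (LinearMap.id.prod LinearMap.id)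
  let f : Module.Dual ℂ S := (ω₀ : E →ₗ[ℂ] ℂ) ∘ₗ LinearMap.fst ℂ E E ∘ₗ S.subtype
  obtain ⟨g, hgf, hgp⟩ := f.exists_extension_of_le_seminorm S (p := p) (by
    rintro ⟨_, u, hu, rfl⟩
    simpa [hp, f] using h u hu)
  have hg : ∀ x, ‖g (x, 0)‖ ≤ infDist x V := fun x => by simpa [hp] using hgp (x, 0)
  have hg₁ : ∀ x, ‖g (x, 0)‖ ≤ 1 * ‖x‖ := fun x => by
    simpa using (hg x).trans (infDist_le_dist_of_mem (x := x) V.zero_mem)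
  let ω : WeakDual ℂ E :=
    StrongDual.toWeakDual (LinearMap.mkContinuous (g ∘ₗ LinearMap.inl ℂ E E) 1 hg₁)
  have hω : ∀ x, ω x = g (x, 0) := fun x => rfl
  refine ⟨ω, fun y hy => ?_, fun x => ?_, fun u hu => ?_⟩
  · simpa [hω, infDist_zero_of_mem hy] using hg y
  · simpa [hω] using hg₁ x
  · have hgu : g (u, u) = ω₀ u := hgf ⟨(u, u), u, hu, rfl⟩
    have : ω u - ω₀ u = g (0, -u) := by
      rw [hω, ← hgu, ← map_sub]
      simp
    rw [this]
    simpa [hp, infDist_zero_of_mem V.zero_mem] using hgp (0, -u)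

attribute [local instance] wijsTopG vietTop

theorem continuous_infDist_wijsTopG (x : E) :
    Continuous fun V : GNorm E => infDist x (V.1 : Set E) :=
  continuous_def.2 fun U hU => isOpen_generateFrom_of_mem ⟨x, U, hU, rfl⟩

theorem le_wijsTopG {t : TopologicalSpace (GNorm E)}
    (h : ∀ x : E, Continuous[t, _] fun V : GNorm E => infDist x (V.1 : Set E)) :
    t ≤ wijsTopG E :=
  le_generateFrom fun _ ⟨x, U, hU, hS⟩ => hS ▸ (h x).isOpen_preimage U hU

-- `vietTopG E` is by definition the topology induced by `unitBall`.
def unitBall (W : GWStar E) : Closeds (dualBall E) :=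
  ⟨Subtype.val ⁻¹' (W.1 : Set (WeakDual ℂ E)), W.2.preimage continuous_subtype_val⟩

theorem unitBall_perp_inter_nonempty_iff (V : GNorm E) (x : E) (a : ℝ) :
    ((unitBall (perpEquiv V) : Set (dualBall E)) ∩ {ν | a < ‖(ν : WeakDual ℂ E) x‖}).Nonempty ↔
      a < infDist x (V.1 : Set E) := by
  refine ⟨fun ⟨ν, hνV, hνx⟩ => hνx.trans_le (norm_apply_le_infDist hνV ν.2 x), fun h => ?_⟩
  obtain ⟨ω, hωV, hω₁, hωx⟩ := exists_mem_perp_norm_apply_eq_infDist V.1 x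
  exact ⟨⟨ω, hω₁⟩, hωV, show a < ‖ω x‖ from hωx.symm ▸ h⟩

theorem unitBall_perp_subset_iff (V : GNorm E) (x : E) (a : ℝ) :
    (unitBall (perpEquiv V) : Set (dualBall E)) ⊆ {ν | ‖(ν : WeakDual ℂ E) x‖ < a} ↔
      infDist x (V.1 : Set E) < a := by
  refine ⟨fun h => ?_, fun h ν hνV => (norm_apply_le_infDist hνV ν.2 x).trans_lt h⟩
  obtain ⟨ω, hωV, hω₁, hωx⟩ := exists_mem_perp_norm_apply_eq_infDist V.1 x
  exact hωx ▸ h (show ⟨ω, hω₁⟩ ∈ (unitBall (perpEquiv V) : Set (dualBall E)) from hωV)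

theorem continuous_infDist_induced_unitBall_perp (x : E) :
    Continuous[.induced (unitBall ∘ perpEquiv) inferInstance, _]
      fun V : GNorm E => infDist x (V.1 : Set E) := by
  let _ := TopologicalSpace.induced (unitBall ∘ perpEquiv (E := E)) inferInstance
  have hx : Continuous fun ν : dualBall E => ‖(ν : WeakDual ℂ E) x‖ :=
    ((WeakDual.eval_continuous x).comp continuous_subtype_val).norm
  refine continuous_iff_lower_upperSemicontinuous.2 ⟨?_, ?_⟩
  · refine lowerSemicontinuous_iff_isOpen_preimage.2 fun a => ?_
    convert isOpen_induced ((continuous_vietTop_iff.1 continuous_id _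
      (isOpen_lt continuous_const hx)).1) using 1
    ext V
    exact (unitBall_perp_inter_nonempty_iff V x a).symm
  · refine upperSemicontinuous_iff_isOpen_preimage.2 fun a => ?_
    convert isOpen_induced ((continuous_vietTop_iff.1 continuous_id _
      (isOpen_lt hx continuous_const)).2) using 1
    ext V
    exact (unitBall_perp_subset_iff V x a).symm

theorem isOpen_setOf_unitBall_perp_subset {U : Set (dualBall E)} (hU : IsOpen U) :
    IsOpen {V : GNorm E | (unitBall (perpEquiv V) : Set (dualBall E)) ⊆ U} := by
  refine isOpen_iff_mem_nhds.2 fun V₀ hV₀ => ?_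
  have hcover : Uᶜ ⊆ ⋃ x ∈ (V₀.1 : Set E), {ν : dualBall E | 1 < ‖(ν : WeakDual ℂ E) x‖} := by
    intro ν hνU
    obtain ⟨x, hxV₀, hνx⟩ : ∃ x ∈ V₀.1, (ν : WeakDual ℂ E) x ≠ 0 := by
      by_contra! h
      exact hνU (hV₀ h)
    refine mem_iUnion₂.2 ⟨(2 / (ν : WeakDual ℂ E) x) • x, V₀.1.smul_mem _ hxV₀, ?_⟩
    simp [hνx]
  have : CompactSpace (dualBall E) := isCompact_iff_compactSpace.1 isCompact_dualBall
  obtain ⟨t, htV₀, ht, hUt⟩ := hU.isClosed_compl.isCompact.elim_finite_subcover_image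
    (fun x _ => isOpen_lt continuous_const
      ((WeakDual.eval_continuous x).comp continuous_subtype_val).norm) hcover
  have hnear : ∀ᶠ V in 𝓝 V₀, ∀ x ∈ t, infDist x (V.1 : Set E) < 1 :=
    ht.eventually_all.2 fun x hx =>
      ((continuous_infDist_wijsTopG x).tendsto V₀).eventually_lt_const
        (by rw [infDist_zero_of_mem (htV₀ hx)]; exact one_pos)
  filter_upwards [hnear] with V hV ν hνV
  by_contra hνU
  obtain ⟨x, hxt, hνx⟩ := mem_iUnion₂.1 (hUt hνU)
  linarith [norm_apply_le_infDist hνV ν.2 x, hV x hxt, show 1 < ‖(ν : WeakDual ℂ E) x‖ from hνx]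

theorem eventually_exists_mem_perp_forall_norm_sub_lt {V₀ : GNorm E} {ω₀ : WeakDual ℂ E}
    (hω₀ : ω₀ ∈ perp E V₀.1) (hω₀₁ : ω₀ ∈ dualBall E) (s : Finset E) {ε : ℝ} (hε : 0 < ε) :
    ∀ᶠ V in 𝓝 V₀, ∃ ω ∈ perp E V.1, ω ∈ dualBall E ∧ ∀ x ∈ s, ‖ω x - ω₀ x‖ < ε := by
  obtain ⟨c, hcs, hc⟩ : ∃ c : ℝ, (∀ x ∈ s, c * ‖x‖ < ε) ∧ 0 < c := by
    refine ((s.eventually_all.2 fun x _ => ?_).and self_mem_nhdsWithin).exists (f := 𝓝[>] 0)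
    exact ((continuous_mul_const ‖x‖).tendsto' 0 0 (zero_mul _)).mono_left nhdsWithin_le_nhds
      |>.eventually_lt_const hε
  let M := Submodule.span ℂ (s : Set E)
  have hK : IsCompact (((↑) : M → E) '' sphere 0 1) :=
    (isCompact_sphere 0 1).image continuous_subtype_val
  filter_upwards [eventually_forall_infDist_lt continuous_infDist_wijsTopG hK hc V₀] with V hV
  have hM : ∀ u ∈ M, ‖ω₀ u‖ ≤ infDist u (V.1 : Set E) + c * ‖u‖ := fun u hu =>
    (norm_apply_le_infDist hω₀ hω₀₁ u).trans
      (Submodule.infDist_le_add_mul_norm_of_norm_eq_one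
        (fun u hu hu₁ => hV u ⟨⟨u, hu⟩, by simpa using hu₁, rfl⟩) hu)
  obtain ⟨ω, hωV, hω₁, hωM⟩ := exists_mem_perp_forall_norm_sub_le hc.le hM
  exact ⟨ω, hωV, hω₁, fun x hx => (hωM x (Submodule.subset_span hx)).trans_lt (hcs x hx)⟩

theorem isOpen_setOf_unitBall_perp_inter_nonempty {U : Set (dualBall E)} (hU : IsOpen U) :
    IsOpen {V : GNorm E | ((unitBall (perpEquiv V) : Set (dualBall E)) ∩ U).Nonempty} := by
  refine isOpen_iff_mem_nhds.2 fun V₀ ⟨ν₀, hν₀V₀, hν₀U⟩ => ?_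
  obtain ⟨U', hU', rfl⟩ := isOpen_induced_iff.1 hU
  obtain ⟨s, ε, hε, hsU'⟩ := WeakDual.exists_finset_subset_of_mem_nhds (hU'.mem_nhds hν₀U)
  filter_upwards [eventually_exists_mem_perp_forall_norm_sub_lt hν₀V₀ ν₀.2 s hε]
    with V ⟨ω, hωV, hω₁, hωs⟩
  exact ⟨⟨ω, hω₁⟩, hωV, hsU' hωs⟩

theorem wijsTopG_eq_induced_unitBall_perp :
    wijsTopG E = .induced (unitBall ∘ perpEquiv) (vietTop (dualBall E)) :=
  le_antisymm
    (continuous_iff_le_induced.1 (continuous_vietTop_iff.2 fun _ hU =>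
      ⟨isOpen_setOf_unitBall_perp_inter_nonempty hU, isOpen_setOf_unitBall_perp_subset hU⟩))
    (le_wijsTopG continuous_infDist_induced_unitBall_perp)

end

/-- The polar map `Φ : G_{‖·‖}(E) → G_{w*}(E*)`, `V ↦ V^⊥`, is a homeomorphism from the
Wijsman topology to the Vietoris topology. -/
theorem isHomeomorph_perp :
    @IsHomeomorph (GNorm E) (GWStar E) (wijsTopG E) (vietTopG E)
      (fun V : GNorm E => (⟨perp E V.1, perp_isClosed E V.1⟩ : GWStar E)) := by
  let _ := wijsTopG E
  let _ := vietTopG E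
  refine isHomeomorph_iff_isEmbedding_surjective.2
    ⟨⟨⟨?_⟩, perpEquiv.injective⟩, perpEquiv.surjective⟩
  exact wijsTopG_eq_induced_unitBall_perp.trans induced_compose.symm
end

section
/- Let (E, ‖·‖) be a normed vector space, let X be a Polish space, and let C ⊆ E be a convex subset which is complete for the metric d(u,v) = ‖u − v‖ and moreover separable. Suppose F assigns to each x ∈ X a nonempty convex subset F(x) of C which is closed in C, and that F is lower continuous, i.e., for every open subset U of C the set {x ∈ X : F(x) ∩ U ≠ ∅} is open in X. Then there is a sequence of continuous maps f_n : X → C such that for every x ∈ X, F(x) equals the closure in C of the set {f_n(x) : n ∈ ℕ}. -/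
/-!
Michael's selection theorem by successive approximation: on a paracompact domain a partition of
unity glues locally constant choices into a continuous map within `ε` of `G x`, and doing this for
`G x ∩ ball (g x) 2⁻ⁿ` produces continuous maps converging uniformly to a selection of
`closure ∘ G`. For the dense version fix a dense sequence `uₘ` in `C`. On the open set `U` where
`F x` meets `ball uₘ 2⁻ᵏ`, Michael's theorem selects from `F x ∩ ball uₘ 2⁻ᵏ`; convex combinations
with a global selection, weighted by cutoffs that vanish near `Uᶜ` and exhaust `U`, turn this
into countably many global selections, one of which comes within `2⁻ᵏ` of `uₘ` at each point of
`U`. Over all `m, k` their values are dense in every `F x`.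
-/

open Set Metric Filter Topology

section Hemicontinuity

variable {X Y : Type*} [TopologicalSpace X]

theorem LowerHemicontinuous.image [TopologicalSpace Y] {Z : Type*} [TopologicalSpace Z]
    {G : X → Set Y} (hG : LowerHemicontinuous G) {φ : Y → Z} (hφ : Continuous φ) :
    LowerHemicontinuous fun x => φ '' G x := by
  rw [lowerHemicontinuous_iff_isOpen_inter_nonempty] at hG ⊢
  intro V hV
  simpa only [image_inter_nonempty_iff] using hG _ (hV.preimage hφ)

theorem LowerHemicontinuous.inter_ball [PseudoMetricSpace Y] {G : X → Set Y}
    (hG : LowerHemicontinuous G) {g : X → Y} (hg : Continuous g) (r : ℝ) :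
    LowerHemicontinuous fun x => G x ∩ ball (g x) r :=
  hG.inter_hasOpenCGraph <|
    isOpen_lt (continuous_snd.dist (hg.comp continuous_fst)) continuous_const

end Hemicontinuity

theorem tendsto_const_div_two_pow (c : ℝ) : Tendsto (fun n : ℕ => c / 2 ^ n) atTop (𝓝 0) :=
  (tendsto_pow_atTop_atTop_of_one_lt one_lt_two).const_div_atTop c

theorem TopologicalSpace.IsSeparable.exists_subset_closure_range {α : Type*} [TopologicalSpace α]
    [Nonempty α] {s : Set α} (hs : IsSeparable s) : ∃ u : ℕ → α, s ⊆ closure (range u) := by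
  obtain ⟨D, hD, hsD⟩ := hs
  obtain ⟨u, hu⟩ := (hD.insert (Classical.arbitrary α)).exists_eq_range (insert_nonempty _ _)
  exact ⟨u, hsD.trans (closure_mono (hu ▸ subset_insert _ _))⟩

theorem IsComplete.exists_tendstoUniformly_of_dist_le_geometric_two {X E : Type*}
    [PseudoMetricSpace E] {s : Set E} (hs : IsComplete s) {u : ℕ → X → E}
    (hus : ∀ n x, u n x ∈ s) {c : ℝ} (hu : ∀ n x, dist (u n x) (u (n + 1) x) ≤ c / 2 / 2 ^ n) :
    ∃ f : X → E, TendstoUniformly u f atTop ∧ ∀ n x, dist (u n x) (f x) ≤ c / 2 ^ n := by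
  have hlim : ∀ x, ∃ y ∈ s, Tendsto (u · x) atTop (𝓝 y) := fun x =>
    cauchySeq_tendsto_of_isComplete hs (hus · x) (cauchySeq_of_le_geometric_two (hu · x))
  choose f _ hf using hlim
  have hbound : ∀ n x, dist (u n x) (f x) ≤ c / 2 ^ n := fun n x =>
    dist_le_of_le_geometric_two_of_tendsto (hu · x) (hf x) n
  refine ⟨f, Metric.tendstoUniformly_iff.2 fun ε hε => ?_, hbound⟩
  filter_upwards [(tendsto_const_div_two_pow c).eventually (gt_mem_nhds hε)] with n hn x
  exact (dist_comm (f x) _ ▸ hbound n x).trans_lt hn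

section Michael

variable {X E : Type*} [TopologicalSpace X] [NormalSpace X] [ParacompactSpace X]
  [NormedAddCommGroup E] [NormedSpace ℝ E] {C : Set E} {G : X → Set E}

theorem exists_continuous_mem_thickening (hC : Convex ℝ C) (hG : LowerHemicontinuous G)
    (hne : ∀ x, (G x).Nonempty) (hconv : ∀ x, Convex ℝ (G x)) (hGC : ∀ x, G x ⊆ C) {ε : ℝ}
    (hε : 0 < ε) : ∃ g : C(X, E), ∀ x, g x ∈ C ∩ thickening ε (G x) := by
  refine exists_continuous_forall_mem_convex_of_local_const
    (fun x => hC.inter ((hconv x).thickening ε)) fun x => ?_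
  obtain ⟨z, hz⟩ := hne x
  have hnear : ∀ᶠ y in 𝓝 x, (G y ∩ ball z ε).Nonempty :=
    lowerHemicontinuousAt_iff.1 (hG x) _ isOpen_ball ⟨z, hz, mem_ball_self hε⟩
  exact ⟨z, hnear.mono fun y ⟨w, hwG, hwz⟩ =>
    ⟨hGC x hz, mem_thickening_iff.2 ⟨w, hwG, mem_ball'.1 hwz⟩⟩⟩

theorem exists_continuous_mem_thickening_near (hC : Convex ℝ C) (hG : LowerHemicontinuous G)
    (hconv : ∀ x, Convex ℝ (G x)) (hGC : ∀ x, G x ⊆ C) {g : X → E} (hg : Continuous g) {δ : ℝ}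
    (hgG : ∀ x, g x ∈ thickening δ (G x)) {ε : ℝ} (hε : 0 < ε) :
    ∃ g' : C(X, E), ∀ x, g' x ∈ C ∩ thickening ε (G x) ∧ dist (g x) (g' x) < δ + ε := by
  obtain ⟨g', hg'⟩ := exists_continuous_mem_thickening hC (hG.inter_ball hg δ)
    (fun x => let ⟨z, hz, hdist⟩ := mem_thickening_iff.1 (hgG x); ⟨z, hz, mem_ball'.2 hdist⟩)
    (fun x => (hconv x).inter (convex_ball _ _)) (fun x => inter_subset_left.trans (hGC x)) hε
  refine ⟨g', fun x => ?_⟩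
  obtain ⟨hC', z, ⟨hzG, hzg⟩, hdist⟩ := And.imp_right mem_thickening_iff.1 (hg' x)
  exact ⟨⟨hC', mem_thickening_iff.2 ⟨z, hzG, hdist⟩⟩,
    (dist_triangle _ z _).trans_lt (add_lt_add (mem_ball'.1 hzg) (dist_comm z _ ▸ hdist))⟩

theorem exists_continuous_mem_closure (hC : Convex ℝ C) (hCc : IsComplete C)
    (hG : LowerHemicontinuous G) (hne : ∀ x, (G x).Nonempty) (hconv : ∀ x, Convex ℝ (G x))
    (hGC : ∀ x, G x ⊆ C) : ∃ f : C(X, E), ∀ x, f x ∈ closure (G x) := by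
  let A (n : ℕ) (g : C(X, E)) : Prop := ∀ x, g x ∈ C ∩ thickening (1 / 2 ^ n) (G x)
  have step : ∀ n g, A n g → ∃ g', A (n + 1) g' ∧ ∀ x, dist (g x) (g' x) ≤ 3 / 2 / 2 ^ n := by
    intro n g hg
    obtain ⟨g', hg'⟩ := exists_continuous_mem_thickening_near hC hG hconv hGC g.continuous
      (fun x => (hg x).2) (ε := 1 / 2 ^ (n + 1)) (by positivity)
    refine ⟨g', fun x => (hg' x).1, fun x => (hg' x).2.le.trans_eq ?_⟩
    ring
  obtain ⟨g₀, hg₀⟩ := exists_continuous_mem_thickening hC hG hne hconv hGC (ε := 1 / 2 ^ 0)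
    (by norm_num)
  choose! next hnextA hnext_dist using step
  let u (n : ℕ) : C(X, E) := n.rec g₀ next
  have hu : ∀ n, A n (u n) := fun n => n.rec hg₀ fun n ih => hnextA n _ ih
  obtain ⟨f, hfu, hf⟩ := hCc.exists_tendstoUniformly_of_dist_le_geometric_two
    (u := fun n x => u n x) (fun n x => (hu n x).1) (fun n x => hnext_dist n _ (hu n) x)
  refine ⟨⟨f, hfu.continuous (.of_forall fun n => (u n).continuous)⟩, fun x => ?_⟩
  refine Metric.mem_closure_iff.2 fun ε hε => ?_
  obtain ⟨n, hn⟩ := ((tendsto_const_div_two_pow 4).eventually (gt_mem_nhds hε)).exists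
  obtain ⟨z, hz, hdist⟩ := mem_thickening_iff.1 (hu n x).2
  refine ⟨z, hz, ?_⟩
  calc dist (f x) z ≤ dist (u n x) (f x) + dist (u n x) z := dist_triangle_left _ _ _
    _ < 3 / 2 ^ n + 1 / 2 ^ n := add_lt_add_of_le_of_lt (hf n x) hdist
    _ = 4 / 2 ^ n := by ring
    _ < ε := hn

end Michael

theorem exists_seq_continuous_selection_eq_on {X E : Type*} [TopologicalSpace X]
    [PerfectlyNormalSpace X] [AddCommGroup E] [Module ℝ E] [TopologicalSpace E]
    [IsTopologicalAddGroup E] [ContinuousSMul ℝ E] {G : X → Set E}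
    (hconv : ∀ x, Convex ℝ (G x)) {f₀ : X → E} (hf₀ : Continuous f₀) (hf₀G : ∀ x, f₀ x ∈ G x)
    {U : Set X} (hU : IsOpen U) {g : U → E} (hg : Continuous g) (hgG : ∀ y : U, g y ∈ G y) :
    ∃ h : ℕ → X → E, (∀ j, Continuous (h j)) ∧ (∀ j x, h j x ∈ G x) ∧
      ∀ y : U, ∃ j, h j y = g y := by
  classical
  obtain ⟨ψ, hψU, hψ⟩ :=
    perfectlyNormalSpace_iff_forall_isClosed_preimage_zero.1 ‹_› _ hU.isClosed_compl
  -- `φ j` vanishes on the neighbourhood `{j ψ < 1}` of `Uᶜ` and equals `1` on `{j ψ ≥ 2}`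
  let φ (j : ℕ) (x : X) : ℝ := projIcc 0 1 zero_le_one (j * ψ x - 1)
  have hφc (j : ℕ) : Continuous (φ j) :=
    continuous_subtype_val.comp (continuous_projIcc.comp (by fun_prop))
  have hφ0 (j : ℕ) (x : X) (hx : j * ψ x < 1) : φ j x = 0 := by
    simp only [φ, projIcc_of_le_left _ (sub_nonpos.2 hx.le)]
  have hφ1 (y : U) : ∃ j : ℕ, φ j y = 1 := by
    have hψy : 0 < ψ y := (hψ y).1.lt_of_ne fun h => (hψU ▸ h.symm : (y : X) ∈ Uᶜ) y.2
    obtain ⟨j, hj⟩ := exists_nat_ge (2 / ψ y)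
    have h2 : 2 ≤ j * ψ y := (div_le_iff₀ hψy).1 hj
    exact ⟨j, by simp only [φ, projIcc_of_right_le _ (by linarith : (1 : ℝ) ≤ j * ψ y - 1)]⟩
  let h (j : ℕ) (x : X) : E := if hx : x ∈ U then f₀ x + φ j x • (g ⟨x, hx⟩ - f₀ x) else f₀ x
  refine ⟨h, fun j => continuous_iff_continuousAt.2 fun x => ?_, fun j x => ?_, fun y => ?_⟩
  · by_cases hx : x ∈ U
    · refine ContinuousOn.continuousAt ?_ (hU.mem_nhds hx)
      rw [continuousOn_iff_continuous_domRestrict]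
      refine ((hf₀.comp continuous_subtype_val).add (((hφc j).comp continuous_subtype_val).smul
        (hg.sub (hf₀.comp continuous_subtype_val)))).congr fun y => ?_
      simp [h, y.2]
    · have hψx : ψ x = 0 := hψU.subset hx
      have hnear : ∀ᶠ y in 𝓝 x, (j : ℝ) * ψ y < 1 :=
        (continuous_const.mul ψ.continuous).continuousAt.eventually_lt continuousAt_const
          (by simp [hψx])
      refine hf₀.continuousAt.congr (hnear.mono fun y hy => ?_)
      by_cases hyU : y ∈ U <;> simp [h, hyU, hφ0 j y hy]
  · by_cases hx : x ∈ U
    · simpa [h, hx] using (hconv x).add_smul_sub_mem (hf₀G x) (hgG ⟨x, hx⟩) (projIcc _ _ _ _).2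
    · simpa [h, hx] using hf₀G x
  · obtain ⟨j, hj⟩ := hφ1 y
    exact ⟨j, by simp [h, hj]⟩

section Dense

variable {X E : Type*} [PseudoMetricSpace X] [NormedAddCommGroup E] [NormedSpace ℝ E]
  {C : Set E} {G : X → Set E}

theorem exists_seq_continuous_selection_near (hC : Convex ℝ C) (hCc : IsComplete C)
    (hG : LowerHemicontinuous G) (hne : ∀ x, (G x).Nonempty) (hconv : ∀ x, Convex ℝ (G x))
    (hclosed : ∀ x, IsClosed (G x)) (hGC : ∀ x, G x ⊆ C) (c : E) (r : ℝ) :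
    ∃ h : ℕ → X → E, (∀ j, Continuous (h j)) ∧ (∀ j x, h j x ∈ G x) ∧
      ∀ x, (G x ∩ ball c r).Nonempty → ∃ j, dist (h j x) c ≤ r := by
  obtain ⟨f₀, hf₀⟩ := exists_continuous_mem_closure hC hCc hG hne hconv hGC
  let U := {x | (G x ∩ ball c r).Nonempty}
  have hU : IsOpen U := lowerHemicontinuous_iff_isOpen_inter_nonempty.1 hG _ isOpen_ball
  obtain ⟨g, hg⟩ := exists_continuous_mem_closure (X := U) (G := fun y => G y ∩ ball c r) hC hCc
    ((hG.comp continuous_subtype_val).inter_hasOpenCGraph (.const isOpen_ball)) (fun y => y.2)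
    (fun y => (hconv y).inter (convex_ball c r)) (fun y => inter_subset_left.trans (hGC y))
  have hgG (y : U) : g y ∈ G y ∩ closedBall c r :=
    closure_minimal (inter_subset_inter_right _ ball_subset_closedBall)
      ((hclosed y).inter isClosed_closedBall) (hg y)
  obtain ⟨h, hhc, hhG, hhg⟩ := exists_seq_continuous_selection_eq_on hconv f₀.continuous
    (fun x => (hclosed x).closure_eq ▸ hf₀ x) hU g.continuous (fun y => (hgG y).1)
  refine ⟨h, hhc, hhG, fun x hx => ?_⟩
  obtain ⟨j, hj⟩ := hhg ⟨x, hx⟩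
  exact ⟨j, hj ▸ (hgG _).2⟩

theorem exists_seq_continuous_selection_dense (hC : Convex ℝ C) (hCc : IsComplete C)
    (hCsep : TopologicalSpace.IsSeparable C) (hG : LowerHemicontinuous G)
    (hne : ∀ x, (G x).Nonempty) (hconv : ∀ x, Convex ℝ (G x)) (hclosed : ∀ x, IsClosed (G x))
    (hGC : ∀ x, G x ⊆ C) :
    ∃ f : ℕ → X → E, (∀ n, Continuous (f n)) ∧ ∀ x, G x = closure (range fun n => f n x) := by
  obtain ⟨u, hu⟩ := hCsep.exists_subset_closure_range
  choose h hhc hhG hhnear using fun m k : ℕ =>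
    exists_seq_continuous_selection_near hC hCc hG hne hconv hclosed hGC (u m) (1 / 2 ^ k)
  obtain ⟨e, he⟩ := exists_surjective_nat (ℕ × ℕ × ℕ)
  refine ⟨fun n => h (e n).1 (e n).2.1 (e n).2.2, fun n => hhc _ _ _, fun x => ?_⟩
  have hrange : (range fun n => h (e n).1 (e n).2.1 (e n).2.2 x) =
      range fun i : ℕ × ℕ × ℕ => h i.1 i.2.1 i.2.2 x :=
    he.range_comp (fun i : ℕ × ℕ × ℕ => h i.1 i.2.1 i.2.2 x)
  rw [hrange]
  refine (closure_minimal (range_subset_iff.2 fun i => hhG _ _ _ x) (hclosed x)).antisymm' ?_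
  intro v hv
  refine Metric.mem_closure_range_iff.2 fun ε hε => ?_
  obtain ⟨k, hk⟩ := ((tendsto_const_div_two_pow 2).eventually (gt_mem_nhds hε)).exists
  obtain ⟨m, hm⟩ :=
    Metric.mem_closure_range_iff.1 (hu (hGC x hv)) (1 / 2 ^ k) (by positivity)
  obtain ⟨j, hj⟩ := hhnear m k x ⟨v, hv, mem_ball.2 hm⟩
  refine ⟨(m, k, j), ?_⟩
  calc dist v (h m k j x) ≤ dist v (u m) + dist (h m k j x) (u m) := dist_triangle_right _ _ _
    _ < 1 / 2 ^ k + 1 / 2 ^ k := add_lt_add_of_lt_of_le hm hj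
    _ = 2 / 2 ^ k := by ring
    _ < ε := hk

end Dense

/-- **Dense version of Michael's selection theorem.** Let `E` be a normed vector space, `X` a
Polish space, and `C ⊆ E` a convex subset which is complete for the norm metric and separable.
If `F` assigns to each `x ∈ X` a nonempty convex subset `F x` of `C`, closed in `C`, and `F` is
lower continuous, then there is a sequence of continuous maps `f n : X → C` such that for every
`x ∈ X`, `F x` is the closure in `C` of `{f n x : n ∈ ℕ}`. -/
theorem michael_selection_dense
    {E : Type*} [NormedAddCommGroup E] [NormedSpace ℝ E]
    {X : Type*} [TopologicalSpace X] [PolishSpace X]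
    {C : Set E} (hCconv : Convex ℝ C) (hCcomp : IsComplete C)
    (hCsep : TopologicalSpace.IsSeparable C)
    (F : X → Set C)
    (hne : ∀ x, (F x).Nonempty)
    (hconv : ∀ x, Convex ℝ (Subtype.val '' F x))
    (hclosed : ∀ x, IsClosed (F x))
    (hlow : ∀ U : Set C, IsOpen U → IsOpen {x : X | (F x ∩ U).Nonempty}) :
    ∃ f : ℕ → X → C, (∀ n, Continuous (f n)) ∧
      ∀ x : X, F x = closure (Set.range fun n => f n x) := by
  let := TopologicalSpace.pseudoMetrizableSpacePseudoMetric X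
  obtain ⟨f, hfc, hfF⟩ := exists_seq_continuous_selection_dense hCconv hCcomp hCsep
    ((lowerHemicontinuous_iff_isOpen_inter_nonempty.2 hlow).image continuous_subtype_val)
    (fun x => (hne x).image _) hconv
    (fun x => hCcomp.isClosed.isClosedEmbedding_subtypeVal.isClosedMap _ (hclosed x))
    (fun x => Subtype.coe_image_subset C (F x))
  have hfC (n : ℕ) (x : X) : f n x ∈ C :=
    Subtype.coe_image_subset C (F x) ((hfF x).symm ▸ subset_closure (mem_range_self n))
  refine ⟨fun n x => ⟨f n x, hfC n x⟩, fun n => (hfc n).subtype_mk _, fun x => ?_⟩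
  rw [Topology.IsInducing.subtypeVal.closure_eq_preimage_closure_image, ← range_comp]
  exact (preimage_image_eq _ Subtype.val_injective).symm.trans (congrArg _ (hfF x))
end
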